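/- Let G = (Q' ∪ S', E) be a complete split graph, i.e. Q' is a clique with |Q'| ≥ 1, S' is a stable set with |S'| ≥ 2, and every vertex of Q' is adjacent to every vertex of S'. Then η(G) = |Q'|. -/

import Mathlib

/-
Adjacent clique vertices `i, j` of the join have the same closed neighbourhood, so
`Σ_{N(i)} f + f i = Σ_{N(j)} f + f j`: additivity forces the clique labels to be distinct,
hence `η ≥ |Q'|`. Conversely, label the stable vertices `q` and the clique vertices `1, …, q`:
clique vertices are separated by their distinct labels, and a clique vertex sees the whole
stable set, whose weight `s * q ≥ 2q` exceeds the weight `≤ q` of its own missing label.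
-/

open Classical in
/-- Sum of the labels `f` over the open neighborhood of `v` in `G`. -/
noncomputable def nbrSum {V : Type*} [Fintype V] (G : SimpleGraph V) (f : V → ℕ) (v : V) : ℕ :=
  ∑ w ∈ Finset.univ.filter (fun w => G.Adj v w), f w

open Classical in
/-- The degree of `v` in `G`. -/
noncomputable def deg {V : Type*} [Fintype V] (G : SimpleGraph V) (v : V) : ℕ :=
  (Finset.univ.filter (fun w => G.Adj v w)).card

/-- `f : V → {1,…,k}` is an additive `k`-coloring of `G`: labels lie in `{1,…,k}` and
adjacent vertices get distinct open-neighborhood sums. -/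
def IsAdditiveColoring {V : Type*} [Fintype V] (G : SimpleGraph V) (k : ℕ) (f : V → ℕ) : Prop :=
  (∀ v, 1 ≤ f v ∧ f v ≤ k) ∧ ∀ u v, G.Adj u v → nbrSum G f u ≠ nbrSum G f v

/-- The additive chromatic number `η(G)`: the least `k` admitting an additive `k`-coloring. -/
noncomputable def eta {V : Type*} [Fintype V] (G : SimpleGraph V) : ℕ :=
  sInf {k | ∃ f : V → ℕ, IsAdditiveColoring G k f}

/-- The join `G ∨ K_q` of `G` with the complete graph on `q` vertices. -/
def joinK {α : Type*} (G : SimpleGraph α) (q : ℕ) : SimpleGraph (α ⊕ Fin q) where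
  Adj x y :=
    match x, y with
    | Sum.inl u, Sum.inl v => G.Adj u v
    | Sum.inr i, Sum.inr j => i ≠ j
    | Sum.inl _, Sum.inr _ => True
    | Sum.inr _, Sum.inl _ => True
  symm := ⟨by
    rintro (u | i) (v | j) h
    · exact h.symm
    · trivial
    · trivial
    · exact Ne.symm h⟩
  loopless := ⟨by
    rintro (u | i) h
    · exact G.irrefl h
    · exact h rfl⟩

section Join

variable {α : Type*} [Fintype α] (G : SimpleGraph α) (q : ℕ) (f : α ⊕ Fin q → ℕ)

lemma nbrSum_joinK_inl (u : α) :
    nbrSum (joinK G q) f (Sum.inl u) = nbrSum G (f ∘ Sum.inl) u + ∑ j, f (Sum.inr j) := by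
  unfold nbrSum
  rw [Finset.sum_filter, Fintype.sum_sum_type, Finset.sum_filter]
  congr 1
  exact Finset.sum_congr rfl fun _ _ => by split_ifs <;> simp_all [joinK]

lemma nbrSum_joinK_inr_add_self (i : Fin q) :
    nbrSum (joinK G q) f (Sum.inr i) + f (Sum.inr i) =
      ∑ u, f (Sum.inl u) + ∑ j, f (Sum.inr j) := by
  unfold nbrSum
  rw [Finset.sum_filter, Fintype.sum_sum_type, add_assoc,
    ← Fintype.sum_ite_eq i (fun j => f (Sum.inr j)), ← Finset.sum_add_distrib]
  congr 1 <;> exact Finset.sum_congr rfl fun _ _ => by split_ifs <;> simp_all [joinK]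

lemma nbrSum_joinK_inr_eq_iff (i j : Fin q) :
    nbrSum (joinK G q) f (Sum.inr i) = nbrSum (joinK G q) f (Sum.inr j) ↔
      f (Sum.inr i) = f (Sum.inr j) := by
  have hi := nbrSum_joinK_inr_add_self G q f i
  have hj := nbrSum_joinK_inr_add_self G q f j
  omega

lemma IsAdditiveColoring.le_of_joinK {k : ℕ} (hf : IsAdditiveColoring (joinK G q) k f) :
    q ≤ k := by
  have hinj : Function.Injective (f ∘ Sum.inr) := fun i j hij => by
    by_contra hne
    exact hf.2 (Sum.inr i) (Sum.inr j) hne ((nbrSum_joinK_inr_eq_iff G q f i j).2 hij)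
  simpa using Finset.card_le_card_of_injOn (f ∘ Sum.inr) (s := Finset.univ)
    (t := Finset.Icc 1 k) (fun i _ => Finset.mem_Icc.2 (hf.1 _)) hinj.injOn

end Join

section Eta

variable {V : Type*} [Fintype V] {G : SimpleGraph V} {k : ℕ} {f : V → ℕ}

lemma eta_le_of_isAdditiveColoring (hf : IsAdditiveColoring G k f) : eta G ≤ k :=
  Nat.sInf_le ⟨f, hf⟩

lemma exists_isAdditiveColoring_eta (hf : IsAdditiveColoring G k f) :
    ∃ g, IsAdditiveColoring G (eta G) g :=
  Nat.sInf_mem (s := {k | ∃ f, IsAdditiveColoring G k f}) ⟨k, f, hf⟩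

end Eta

lemma nbrSum_bot {V : Type*} [Fintype V] (f : V → ℕ) (v : V) : nbrSum ⊥ f v = 0 := by
  simp [nbrSum]

def splitColoring (s q : ℕ) : Fin s ⊕ Fin q → ℕ :=
  Sum.elim (fun _ => q) (fun i => i + 1)

lemma isAdditiveColoring_splitColoring {s q : ℕ} (hq : 1 ≤ q) (hs : 2 ≤ s) :
    IsAdditiveColoring (joinK (⊥ : SimpleGraph (Fin s)) q) q (splitColoring s q) := by
  set f := splitColoring s q
  have hS : ∑ u, f (Sum.inl u) = s * q := by simp [f, splitColoring]
  have hsep : ∀ u i,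
      nbrSum (joinK ⊥ q) f (Sum.inl u) ≠ nbrSum (joinK ⊥ q) f (Sum.inr i) := by
    intro u i h
    have hi := nbrSum_joinK_inr_add_self ⊥ q f i
    have hlabel : f (Sum.inr i) ≤ q := i.isLt
    rw [nbrSum_joinK_inl, nbrSum_bot, hS] at *
    nlinarith
  refine ⟨?_, ?_⟩
  · rintro (u | i)
    · exact ⟨hq, le_rfl⟩
    · exact ⟨Nat.le_add_left 1 i, i.isLt⟩
  · rintro (u | i) (v | j) h
    · exact h.elim
    · exact hsep u j
    · exact (hsep v i).symm
    · rw [Ne, nbrSum_joinK_inr_eq_iff]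
      exact fun hij => h (Fin.ext (by simpa [f, splitColoring] using hij))

/-- The complete split graph with clique of size `q ≥ 1` and stable set of size `s ≥ 2`
has additive chromatic number `q`. -/
theorem eta_complete_split (q s : ℕ) (hq : 1 ≤ q) (hs : 2 ≤ s) :
    eta (joinK (⊥ : SimpleGraph (Fin s)) q) = q := by
  have hcol := isAdditiveColoring_splitColoring hq hs
  obtain ⟨f, hf⟩ := exists_isAdditiveColoring_eta hcol
  exact le_antisymm (eta_le_of_isAdditiveColoring hcol) hf.le_of_joinK
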